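/- arXiv:2112.13495 — 4 statements merged into one kernel-verified Lean document; each statement's English description precedes it below -/
import Mathlib

section
/- Let W^B be a uniformly random size-I_T subset of {1,...,I} and W^S an independent uniformly random size-J_T subset of {1,...,J}. Let a_{ij} be fixed reals whose row sums and column sums are all zero (Σ_i a_{ij} = 0 for all j, Σ_j a_{ij} = 0 for all i). Then the random variable (1/(I_T J_T)) Σ_{i,j} W^B_i W^S_j a_{ij} has mean zero and variance (I_C/(I_T I)) (J_C/(J_T J)) · (1/((I−1)(J−1))) Σ_{i,j} a_{ij}². -/
open Finset

lemma card_filter_superset {α : Type*} [DecidableEq α] (u t : Finset α) (k : ℕ)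
    (htu : t ⊆ u) (htk : t.card ≤ k) :
    ((powersetCard k u).filter (fun s => t ⊆ s)).card = (u.card - t.card).choose (k - t.card) := by
  rw [← card_sdiff_of_subset htu, ← Finset.card_powersetCard (k - t.card) (u \ t)]
  apply Finset.card_bij' (fun s _ => s \ t) (fun r _ => r ∪ t)
  · intro s hs
    simp only [mem_filter, mem_powersetCard] at hs
    obtain ⟨⟨hsu, hsk⟩, hts⟩ := hs
    simp only [mem_powersetCard]
    exact ⟨sdiff_subset_sdiff hsu (le_refl t), by rw [card_sdiff_of_subset hts, hsk]⟩
  · intro r hr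
    simp only [mem_powersetCard] at hr
    obtain ⟨hru, hrk⟩ := hr
    have hdisj : Disjoint r t := disjoint_of_subset_left hru sdiff_disjoint
    simp only [mem_filter, mem_powersetCard]
    refine ⟨⟨union_subset (hru.trans sdiff_subset) htu, ?_⟩, subset_union_right⟩
    rw [card_union_of_disjoint hdisj, hrk]
    omega
  · intro s hs
    simp only [mem_filter, mem_powersetCard] at hs
    exact sdiff_union_of_subset hs.2
  · intro r hr
    simp only [mem_powersetCard] at hr
    have hdisj : Disjoint r t := disjoint_of_subset_left hr.1 sdiff_disjoint
    exact union_sdiff_cancel_right hdisj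

/-- number of `k`-subsets containing a fixed pair of distinct elements (junk value `0` for
`k ≤ 1`). -/
def pairCount (n k : ℕ) : ℕ := if k ≤ 1 then 0 else (n - 2).choose (k - 2)

lemma count_one (n k : ℕ) (hk1 : 1 ≤ k) (i : Fin n) :
    ∑ s ∈ powersetCard k (univ : Finset (Fin n)), (if i ∈ s then (1:ℝ) else 0)
      = ((n - 1).choose (k - 1) : ℕ) := by
  rw [Finset.sum_boole]
  norm_cast
  have h := card_filter_superset (univ : Finset (Fin n)) {i} k (by simp) (by simpa using hk1)
  simp only [card_singleton, card_univ, Fintype.card_fin, singleton_subset_iff] at h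
  convert h using 2

lemma count_two (n k : ℕ) (hk1 : 1 ≤ k) (i i' : Fin n) (hii : i ≠ i') :
    ∑ s ∈ powersetCard k (univ : Finset (Fin n)),
        (if i ∈ s then (1:ℝ) else 0) * (if i' ∈ s then (1:ℝ) else 0)
      = (pairCount n k : ℕ) := by
  have hterm : ∀ s : Finset (Fin n),
      (if i ∈ s then (1:ℝ) else 0) * (if i' ∈ s then (1:ℝ) else 0)
        = if ({i, i'} : Finset (Fin n)) ⊆ s then (1:ℝ) else 0 := by
    intro s
    by_cases h1 : i ∈ s <;> by_cases h2 : i' ∈ s <;>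
      simp [h1, h2, insert_subset_iff]
  simp_rw [hterm]
  rw [Finset.sum_boole]
  norm_cast
  have hcard : ({i, i'} : Finset (Fin n)).card = 2 := by
    rw [card_insert_of_notMem (by simpa using hii), card_singleton]
  by_cases hk : k ≤ 1
  · have hk' : k = 1 := le_antisymm hk hk1
    subst hk'
    rw [pairCount]
    simp only [le_refl, if_pos]
    rw [Finset.card_eq_zero, Finset.filter_eq_empty_iff]
    intro s hs
    simp only [mem_powersetCard] at hs
    intro hsub
    have := Finset.card_le_card hsub
    omega
  · have h := card_filter_superset (univ : Finset (Fin n)) {i, i'} k (by simp) (by omega)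
    simp only [hcard, card_univ, Fintype.card_fin] at h
    rw [pairCount, if_neg hk]
    convert h using 2

lemma count_one_id (n k : ℕ) (hk1 : 1 ≤ k) (hkn : k ≤ n) :
    (((n - 1).choose (k - 1) : ℕ) : ℝ) * n = (n.choose k : ℕ) * k := by
  obtain ⟨m, rfl⟩ : ∃ m, n = m + 1 := ⟨n - 1, by omega⟩
  obtain ⟨l, rfl⟩ : ∃ l, k = l + 1 := ⟨k - 1, by omega⟩
  have h := Nat.add_one_mul_choose_eq m l
  have := congrArg (fun x : ℕ => (x : ℝ)) h
  push_cast [Nat.add_sub_cancel] at this ⊢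
  linarith

lemma count_two_id (n k : ℕ) (hk1 : 1 ≤ k) (hkn : k ≤ n) :
    ((pairCount n k : ℕ) : ℝ) * (n * ((n:ℝ) - 1)) = (n.choose k : ℕ) * (k * ((k:ℝ) - 1)) := by
  by_cases hk : k ≤ 1
  · have : k = 1 := by omega
    subst this
    simp [pairCount]
  · obtain ⟨l, rfl⟩ : ∃ l, k = l + 2 := ⟨k - 2, by omega⟩
    obtain ⟨m, rfl⟩ : ∃ m, n = m + 2 := ⟨n - 2, by omega⟩
    rw [pairCount, if_neg hk]
    simp only [Nat.add_sub_cancel]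
    have h1 := Nat.add_one_mul_choose_eq m l
    have h2 := Nat.add_one_mul_choose_eq (m+1) (l+1)
    have key : m.choose l * ((m+2) * (m+1)) = (m+2).choose (l+2) * ((l+2) * (l+1)) := by
      nlinarith [h1, h2]
    have := congrArg (fun x : ℕ => (x : ℝ)) key
    push_cast at this
    push_cast
    linarith

lemma centered_quad {n : ℕ} (x y : Fin n → ℝ) (hx : ∑ i, x i = 0) (A B : ℝ) :
    ∑ i, ∑ i', (if i = i' then A else B) * (x i * y i') = (A - B) * ∑ i, x i * y i := by
  have hrow : ∀ i, ∑ i', (if i = i' then A else B) * (x i * y i')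
      = B * (x i * ∑ i', y i') + (A - B) * (x i * y i) := by
    intro i
    have : ∀ i', (if i = i' then A else B) * (x i * y i')
        = B * (x i * y i') + (if i' = i then (A - B) * (x i * y i') else 0) := by
      intro i'
      by_cases h : i = i'
      · subst h; simp; ring
      · simp [h, Ne.symm h]
    simp_rw [this, Finset.sum_add_distrib, Finset.sum_ite_eq' univ i, mem_univ, if_pos,
      ← Finset.mul_sum]
  simp_rw [hrow, Finset.sum_add_distrib, ← Finset.mul_sum]
  have : ∑ i, x i * ∑ i', y i' = (∑ i, x i) * ∑ i', y i' := by rw [Finset.sum_mul]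
  rw [this, hx]
  ring

lemma swap4 {α β γ δ M : Type*} [AddCommMonoid M] (s : Finset α) (t : Finset β)
    (u : Finset γ) (v : Finset δ) (f : α → β → γ → δ → M) :
    ∑ a ∈ s, ∑ b ∈ t, ∑ c ∈ u, ∑ d ∈ v, f a b c d
      = ∑ c ∈ u, ∑ d ∈ v, ∑ a ∈ s, ∑ b ∈ t, f a b c d := by
  rw [show (∑ a ∈ s, ∑ b ∈ t, ∑ c ∈ u, ∑ d ∈ v, f a b c d)
      = ∑ a ∈ s, ∑ c ∈ u, ∑ b ∈ t, ∑ d ∈ v, f a b c d from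
    Finset.sum_congr rfl fun a _ => Finset.sum_comm]
  rw [Finset.sum_comm]
  refine Finset.sum_congr rfl fun c _ => ?_
  rw [show (∑ a ∈ s, ∑ b ∈ t, ∑ d ∈ v, f a b c d)
      = ∑ a ∈ s, ∑ d ∈ v, ∑ b ∈ t, f a b c d from
    Finset.sum_congr rfl fun a _ => Finset.sum_comm]
  rw [Finset.sum_comm]

lemma sum2_factor {α β : Type*} (P : Finset α) (Q : Finset β) (u : α → ℝ) (v : β → ℝ) (c : ℝ) :
    ∑ s ∈ P, ∑ t ∈ Q, u s * v t * c = (∑ s ∈ P, u s) * ((∑ t ∈ Q, v t) * c) := by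
  rw [← mul_assoc, Finset.sum_mul_sum, Finset.sum_mul]
  exact Finset.sum_congr rfl fun s _ => by rw [Finset.sum_mul]

lemma pull_swap {n m : ℕ} (C : ℝ) (F : Fin n → Fin n → Fin m → ℝ) :
    ∑ i, ∑ i', C * ∑ j, F i i' j = C * ∑ j, ∑ i, ∑ i', F i i' j := by
  simp_rw [← Finset.mul_sum]
  congr 1
  rw [show (∑ i, ∑ i', ∑ j, F i i' j) = ∑ i, ∑ j, ∑ i', F i i' j from
    Finset.sum_congr rfl fun i _ => Finset.sum_comm]
  rw [Finset.sum_comm]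

lemma mean_sum {I J : ℕ} (P : Finset (Finset (Fin I))) (Q : Finset (Finset (Fin J)))
    (g : Fin I → Finset (Fin I) → ℝ) (h : Fin J → Finset (Fin J) → ℝ)
    (a : Fin I → Fin J → ℝ) :
    ∑ s ∈ P, ∑ t ∈ Q, ∑ i, ∑ j, g i s * h j t * a i j
      = ∑ i, ∑ j, (∑ s ∈ P, g i s) * ((∑ t ∈ Q, h j t) * a i j) := by
  rw [swap4]
  exact Finset.sum_congr rfl fun i _ => Finset.sum_congr rfl fun j _ =>
    sum2_factor P Q _ _ _

lemma quad_sum {I J : ℕ} (P : Finset (Finset (Fin I))) (Q : Finset (Finset (Fin J)))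
    (g : Fin I → Finset (Fin I) → ℝ) (h : Fin J → Finset (Fin J) → ℝ)
    (a : Fin I → Fin J → ℝ) :
    ∑ s ∈ P, ∑ t ∈ Q, (∑ i, ∑ j, g i s * h j t * a i j) ^ 2
      = ∑ i, ∑ i', ∑ j, ∑ j',
          (∑ s ∈ P, g i s * g i' s) * ((∑ t ∈ Q, h j t * h j' t) * (a i j * a i' j')) := by
  have hsq : ∀ s t, (∑ i, ∑ j, g i s * h j t * a i j) ^ 2
      = ∑ i, ∑ i', ∑ j, ∑ j',
          (g i s * g i' s) * (h j t * h j' t) * (a i j * a i' j') := by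
    intro s t
    rw [sq, Finset.sum_mul_sum]
    refine Finset.sum_congr rfl fun i _ => Finset.sum_congr rfl fun i' _ => ?_
    rw [Finset.sum_mul_sum]
    refine Finset.sum_congr rfl fun j _ => Finset.sum_congr rfl fun j' _ => by ring
  simp_rw [hsq]
  rw [swap4]
  refine Finset.sum_congr rfl fun i _ => Finset.sum_congr rfl fun i' _ => ?_
  rw [swap4]
  exact Finset.sum_congr rfl fun j _ => Finset.sum_congr rfl fun j' _ =>
    sum2_factor P Q _ _ _

/-- Expectation under two independent uniform fixed-size random subsets of `Fin I` and `Fin J`. -/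
noncomputable def srsExp2 (I J IT JT : ℕ)
    (f : Finset (Fin I) → Finset (Fin J) → ℝ) : ℝ :=
  (∑ s ∈ Finset.powersetCard IT (Finset.univ : Finset (Fin I)),
     ∑ t ∈ Finset.powersetCard JT (Finset.univ : Finset (Fin J)), f s t) /
    (((Finset.powersetCard IT (Finset.univ : Finset (Fin I))).card : ℝ) *
     ((Finset.powersetCard JT (Finset.univ : Finset (Fin J))).card : ℝ))

/-- Variance under the double randomization. -/
noncomputable def srsVar2 (I J IT JT : ℕ)
    (f : Finset (Fin I) → Finset (Fin J) → ℝ) : ℝ :=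
  srsExp2 I J IT JT (fun s t => (f s t) ^ 2) - (srsExp2 I J IT JT f) ^ 2

/-- for a doubly centered fixed matrix `a`, the bilinear statistic
`(1/(I_T J_T)) ∑_{i,j} W^B_i W^S_j a_{ij}` has mean zero and variance
`(I_C/(I_T I))(J_C/(J_T J)) · (1/((I−1)(J−1))) ∑_{ij} a_{ij}²`. -/
theorem bilinear_statistic_mean_variance (I J IT JT : ℕ)
    (hI : 2 ≤ I) (hJ : 2 ≤ J)
    (hIT1 : 1 ≤ IT) (hIT2 : IT ≤ I - 1) (hJT1 : 1 ≤ JT) (hJT2 : JT ≤ J - 1)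
    (a : Fin I → Fin J → ℝ)
    (hrow : ∀ i : Fin I, ∑ j : Fin J, a i j = 0)
    (hcol : ∀ j : Fin J, ∑ i : Fin I, a i j = 0) :
    srsExp2 I J IT JT (fun s t => (1 / ((IT : ℝ) * JT)) *
        ∑ i, ∑ j, (if i ∈ s then (1 : ℝ) else 0) * (if j ∈ t then (1 : ℝ) else 0) * a i j) = 0 ∧
    srsVar2 I J IT JT (fun s t => (1 / ((IT : ℝ) * JT)) *
        ∑ i, ∑ j, (if i ∈ s then (1 : ℝ) else 0) * (if j ∈ t then (1 : ℝ) else 0) * a i j)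
      = (((I - IT : ℕ) : ℝ) / ((IT : ℝ) * I)) * (((J - JT : ℕ) : ℝ) / ((JT : ℝ) * J)) *
          ((1 / (((I : ℝ) - 1) * ((J : ℝ) - 1))) * ∑ i, ∑ j, (a i j) ^ 2) := by
  have hITI : IT < I := by omega
  have hJTJ : JT < J := by omega
  set c : ℝ := 1 / ((IT : ℝ) * JT) with hc
  -- counting values
  have hgsum : ∀ i : Fin I,
      ∑ s ∈ powersetCard IT (univ : Finset (Fin I)), (if i ∈ s then (1:ℝ) else 0)
        = (((I - 1).choose (IT - 1) : ℕ) : ℝ) := fun i => count_one I IT hIT1 i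
  have hhsum : ∀ j : Fin J,
      ∑ t ∈ powersetCard JT (univ : Finset (Fin J)), (if j ∈ t then (1:ℝ) else 0)
        = (((J - 1).choose (JT - 1) : ℕ) : ℝ) := fun j => count_one J JT hJT1 j
  have hgg : ∀ i i' : Fin I,
      ∑ s ∈ powersetCard IT (univ : Finset (Fin I)),
        (if i ∈ s then (1:ℝ) else 0) * (if i' ∈ s then (1:ℝ) else 0)
      = if i = i' then (((I - 1).choose (IT - 1) : ℕ) : ℝ) else ((pairCount I IT : ℕ) : ℝ) := by
    intro i i'
    by_cases h : i = i'
    · subst h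
      rw [if_pos rfl, ← hgsum i]
      exact Finset.sum_congr rfl fun s _ => by by_cases hi : i ∈ s <;> simp [hi]
    · rw [if_neg h]
      exact count_two I IT hIT1 i i' h
  have hhh : ∀ j j' : Fin J,
      ∑ t ∈ powersetCard JT (univ : Finset (Fin J)),
        (if j ∈ t then (1:ℝ) else 0) * (if j' ∈ t then (1:ℝ) else 0)
      = if j = j' then (((J - 1).choose (JT - 1) : ℕ) : ℝ) else ((pairCount J JT : ℕ) : ℝ) := by
    intro j j'
    by_cases h : j = j'
    · subst h
      rw [if_pos rfl, ← hhsum j]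
      exact Finset.sum_congr rfl fun t _ => by by_cases hj : j ∈ t <;> simp [hj]
    · rw [if_neg h]
      exact count_two J JT hJT1 j j' h
  -- the mean is zero
  have hmean : srsExp2 I J IT JT (fun s t => c *
      ∑ i, ∑ j, (if i ∈ s then (1 : ℝ) else 0) * (if j ∈ t then (1 : ℝ) else 0) * a i j) = 0 := by
    rw [srsExp2]
    have hnum : (∑ s ∈ powersetCard IT (univ : Finset (Fin I)),
        ∑ t ∈ powersetCard JT (univ : Finset (Fin J)), c *
          ∑ i, ∑ j, (if i ∈ s then (1 : ℝ) else 0) * (if j ∈ t then (1 : ℝ) else 0) * a i j)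
        = 0 := by
      simp only [← Finset.mul_sum]
      rw [mean_sum]
      simp_rw [hgsum, hhsum, ← Finset.mul_sum]
      have hz : ∑ i, ∑ j, a i j = 0 := by
        simp only [hrow, Finset.sum_const_zero]
      rw [hz]
      ring
    rw [hnum, zero_div]
  refine ⟨hmean, ?_⟩
  -- variance
  rw [srsVar2, hmean]
  rw [srsExp2]
  have hnum2 : (∑ s ∈ powersetCard IT (univ : Finset (Fin I)),
      ∑ t ∈ powersetCard JT (univ : Finset (Fin J)),
        (c * ∑ i, ∑ j, (if i ∈ s then (1 : ℝ) else 0) * (if j ∈ t then (1 : ℝ) else 0) * a i j) ^ 2)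
      = c ^ 2 * (((((I - 1).choose (IT - 1) : ℕ) : ℝ) - ((pairCount I IT : ℕ) : ℝ)) *
          (((((J - 1).choose (JT - 1) : ℕ) : ℝ) - ((pairCount J JT : ℕ) : ℝ)) *
            ∑ i, ∑ j, (a i j) ^ 2)) := by
    simp only [mul_pow, ← Finset.mul_sum]
    rw [quad_sum]
    congr 1
    simp_rw [hgg, hhh]
    set A : ℝ := (((I - 1).choose (IT - 1) : ℕ) : ℝ) with hA
    set B : ℝ := ((pairCount I IT : ℕ) : ℝ) with hB
    set A' : ℝ := (((J - 1).choose (JT - 1) : ℕ) : ℝ) with hA'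
    set B' : ℝ := ((pairCount J JT : ℕ) : ℝ) with hB'
    have step1 : ∀ i i' : Fin I,
        ∑ j, ∑ j', (if i = i' then A else B) * ((if j = j' then A' else B') * (a i j * a i' j'))
          = (if i = i' then A else B) * ((A' - B') * ∑ j, a i j * a i' j) := by
      intro i i'
      simp only [← Finset.mul_sum]
      rw [centered_quad (a i) (a i') (hrow i) A' B']
    simp_rw [step1]
    have step2 : ∀ i i' : Fin I,
        (if i = i' then A else B) * ((A' - B') * ∑ j, a i j * a i' j)
          = (A' - B') * ∑ j, (if i = i' then A else B) * (a i j * a i' j) := by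
      intro i i'
      rw [← Finset.mul_sum]
      ring
    simp_rw [step2]
    rw [pull_swap (A' - B') (fun i i' j => (if i = i' then A else B) * (a i j * a i' j))]
    have step3 : ∀ j : Fin J,
        ∑ i : Fin I, ∑ i' : Fin I, (if i = i' then A else B) * (a i j * a i' j)
          = (A - B) * ∑ i, a i j * a i j := fun j =>
      centered_quad (fun i => a i j) (fun i => a i j) (hcol j) A B
    simp_rw [step3]
    rw [show (∑ j : Fin J, (A - B) * ∑ i : Fin I, a i j * a i j)
        = (A - B) * ∑ i, ∑ j, (a i j) ^ 2 from ?_]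
    · ring
    rw [← Finset.mul_sum]
    congr 1
    rw [Finset.sum_comm]
    exact Finset.sum_congr rfl fun i _ => Finset.sum_congr rfl fun j _ => (sq (a i j)).symm
  rw [hnum2]
  -- now pure arithmetic
  rw [Finset.card_powersetCard, Finset.card_powersetCard, card_univ, card_univ,
    Fintype.card_fin, Fintype.card_fin]
  have h1I := count_one_id I IT hIT1 (le_of_lt hITI)
  have h2I := count_two_id I IT hIT1 (le_of_lt hITI)
  have h1J := count_one_id J JT hJT1 (le_of_lt hJTJ)
  have h2J := count_two_id J JT hJT1 (le_of_lt hJTJ)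
  have hXI : ((((I - 1).choose (IT - 1) : ℕ) : ℝ) - ((pairCount I IT : ℕ) : ℝ))
      * ((I:ℝ) * ((I:ℝ) - 1)) = ((I.choose IT : ℕ) : ℝ) * ((IT:ℝ) * ((I:ℝ) - (IT:ℝ))) := by
    linear_combination ((I:ℝ) - 1) * h1I - h2I
  have hXJ : ((((J - 1).choose (JT - 1) : ℕ) : ℝ) - ((pairCount J JT : ℕ) : ℝ))
      * ((J:ℝ) * ((J:ℝ) - 1)) = ((J.choose JT : ℕ) : ℝ) * ((JT:ℝ) * ((J:ℝ) - (JT:ℝ))) := by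
    linear_combination ((J:ℝ) - 1) * h1J - h2J
  have hI0 : (0:ℝ) < (I:ℝ) := by positivity
  have hI1 : (0:ℝ) < (I:ℝ) - 1 := by
    have : (2:ℝ) ≤ (I:ℝ) := by exact_mod_cast hI
    linarith
  have hJ0 : (0:ℝ) < (J:ℝ) := by positivity
  have hJ1 : (0:ℝ) < (J:ℝ) - 1 := by
    have : (2:ℝ) ≤ (J:ℝ) := by exact_mod_cast hJ
    linarith
  have hIT0 : (0:ℝ) < (IT:ℝ) := by exact_mod_cast hIT1
  have hJT0 : (0:ℝ) < (JT:ℝ) := by exact_mod_cast hJT1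
  have hnI0 : (0:ℝ) < ((I.choose IT : ℕ) : ℝ) := by
    exact_mod_cast Nat.choose_pos (le_of_lt hITI)
  have hnJ0 : (0:ℝ) < ((J.choose JT : ℕ) : ℝ) := by
    exact_mod_cast Nat.choose_pos (le_of_lt hJTJ)
  have hXI' : (((I - 1).choose (IT - 1) : ℕ) : ℝ) - ((pairCount I IT : ℕ) : ℝ)
      = ((I.choose IT : ℕ) : ℝ) * ((IT:ℝ) * ((I:ℝ) - (IT:ℝ))) / ((I:ℝ) * ((I:ℝ) - 1)) :=
    (eq_div_iff (by positivity)).mpr hXI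
  have hXJ' : (((J - 1).choose (JT - 1) : ℕ) : ℝ) - ((pairCount J JT : ℕ) : ℝ)
      = ((J.choose JT : ℕ) : ℝ) * ((JT:ℝ) * ((J:ℝ) - (JT:ℝ))) / ((J:ℝ) * ((J:ℝ) - 1)) :=
    (eq_div_iff (by positivity)).mpr hXJ
  rw [hXI', hXJ', hc]
  rw [Nat.cast_sub (le_of_lt hITI), Nat.cast_sub (le_of_lt hJTJ)]
  field_simp
  ring
end

section
/- In a simple multiple randomization design with local interference, the sample average for the treated type decomposes as Ȳ̄_t = Ȳ̄(t) + (1/I_T)Σ_i D^B_i Ẏ^B_i(t) + (1/J_T)Σ_j D^S_j Ẏ^S_j(t) + (1/(I_T J_T))Σ_{i,j} D^B_i D^S_j Ẏ_{ij}(t), where D^B_i = W^B_i − I_T/I, D^S_j = W^S_j − J_T/J, Ẏ^B_i(t) = Ȳ^B_i(t) − Ȳ̄(t), Ẏ^S_j(t) = Ȳ^S_j(t) − Ȳ̄(t), and Ẏ_{ij}(t) = Y_{ij}(t) − Ȳ^B_i(t) − Ȳ^S_j(t) + Ȳ̄(t). -/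
open Finset

lemma indsum {α : Type*} [Fintype α] [DecidableEq α] (s : Finset α) (c : ℝ) (f : α → ℝ) :
    ∑ i, ((if i ∈ s then (1:ℝ) else 0) - c) * f i = ∑ i ∈ s, f i - c * ∑ i, f i := by
  simp [sub_mul, Finset.sum_sub_distrib, ite_mul, Finset.mul_sum, Finset.sum_ite_mem]

/-- deterministic decomposition of the treated-type sample average.
For every realization of the buyer subset `s` (size `I_T`) and seller subset `u` (size `J_T`):
`Ȳ̄_t = Ȳ̄(t) + (1/I_T)Σ_i D^B_i Ẏ^B_i + (1/J_T)Σ_j D^S_j Ẏ^S_j + (1/(I_T J_T))Σ_{ij} D^B_i D^S_j Ẏ_{ij}`. -/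
theorem treated_sample_average_decomposition (I J IT JT : ℕ)
    (hI : 0 < I) (hJ : 0 < J) (hIT : 0 < IT) (hJT : 0 < JT)
    (Y : Fin I → Fin J → ℝ)
    (s : Finset (Fin I)) (u : Finset (Fin J))
    (hs : s.card = IT) (hu : u.card = JT) :
    -- grand mean, row means, column means
    let Ybar : ℝ := (∑ i, ∑ j, Y i j) / ((I : ℝ) * J)
    let YB : Fin I → ℝ := fun i => (∑ j, Y i j) / (J : ℝ)
    let YS : Fin J → ℝ := fun j => (∑ i, Y i j) / (I : ℝ)
    let DB : Fin I → ℝ := fun i => (if i ∈ s then (1 : ℝ) else 0) - (IT : ℝ) / I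
    let DS : Fin J → ℝ := fun j => (if j ∈ u then (1 : ℝ) else 0) - (JT : ℝ) / J
    ((∑ i, ∑ j, (if i ∈ s then (1 : ℝ) else 0) * (if j ∈ u then (1 : ℝ) else 0) * Y i j)
        / ((IT : ℝ) * JT))
      = Ybar
        + (1 / (IT : ℝ)) * ∑ i, DB i * (YB i - Ybar)
        + (1 / (JT : ℝ)) * ∑ j, DS j * (YS j - Ybar)
        + (1 / ((IT : ℝ) * JT)) * ∑ i, ∑ j, DB i * DS j * (Y i j - YB i - YS j + Ybar) := by
  intro Ybar YB YS DB DS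
  simp only [Ybar, YB, YS, DB, DS]
  have e1 : (∑ i, ∑ j, (if i ∈ s then (1 : ℝ) else 0) * (if j ∈ u then (1 : ℝ) else 0) * Y i j)
      = ∑ i ∈ s, ∑ j ∈ u, Y i j := by
    simp [ite_mul, Finset.sum_ite_mem]
  rw [e1]
  simp only [mul_assoc, ← Finset.mul_sum]
  simp only [indsum]
  simp only [Finset.sum_sub_distrib, Finset.sum_add_distrib, ← Finset.sum_div,
    Finset.sum_const, nsmul_eq_mul, hs, hu, Finset.card_univ, Fintype.card_fin,
    ← Finset.mul_sum]
  have hc1 : ∑ j : Fin J, ∑ i : Fin I, Y i j = ∑ i : Fin I, ∑ j : Fin J, Y i j :=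
    Finset.sum_comm
  have hc2 : ∑ i : Fin I, ∑ j ∈ u, Y i j = ∑ j ∈ u, ∑ i : Fin I, Y i j :=
    Finset.sum_comm
  rw [hc1, hc2]
  have hI' : (I:ℝ) ≠ 0 := Nat.cast_ne_zero.2 hI.ne'
  have hJ' : (J:ℝ) ≠ 0 := Nat.cast_ne_zero.2 hJ.ne'
  have hIT' : (IT:ℝ) ≠ 0 := Nat.cast_ne_zero.2 hIT.ne'
  have hJT' : (JT:ℝ) ≠ 0 := Nat.cast_ne_zero.2 hJT.ne'
  field_simp
  ring
end

section
/- In a simple multiple randomization design, the covariance of the buyer-residual terms for two types ω, ω' satisfies Cov(ε̄^B_ω, ε̄^B_{ω'}) = (I_C/(I_T I)) · (1/(I−1)) Σ_i Ẏ^B_i(ω) Ẏ^B_i(ω'), and equivalently equals (I_C/(2 I_T I)) (S²_ω(B) + S²_{ω'}(B) − S²_{ω,ω'}(B)), where S²_{ω,ω'}(B) = (1/(I−1))Σ_i(Ẏ^B_i(ω) − Ẏ^B_i(ω'))². -/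
open Finset

/-- Expectation under the uniform distribution over size-`n` subsets of `Fin I`. -/
noncomputable def srsExp (I n : ℕ) (f : Finset (Fin I) → ℝ) : ℝ :=
  (∑ s ∈ Finset.powersetCard n (Finset.univ : Finset (Fin I)), f s) /
    ((Finset.powersetCard n (Finset.univ : Finset (Fin I))).card : ℝ)

/-- Covariance under the uniform distribution over size-`n` subsets. -/
noncomputable def srsCov (I n : ℕ) (f g : Finset (Fin I) → ℝ) : ℝ :=
  srsExp I n (fun s => f s * g s) - srsExp I n f * srsExp I n g

/-- Buyer residual term for a fixed (centered) row-deviation vector `a`. -/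
noncomputable def epsB (I IT : ℕ) (a : Fin I → ℝ) (s : Finset (Fin I)) : ℝ :=
  (1 / (IT : ℝ)) * ∑ i, ((if i ∈ s then (1 : ℝ) else 0) - (IT : ℝ) / I) * a i

/-- covariance of buyer-residual terms for two types:
`Cov(ε̄^B_ω, ε̄^B_{ω'}) = (I_C/(I_T I))·(1/(I−1))·Σ_i Ẏ^B_i(ω)Ẏ^B_i(ω')`
`= (I_C/(2 I_T I))·(S²_ω(B)+S²_{ω'}(B)−S²_{ω,ω'}(B))`. -/
theorem buyer_residual_covariance (I IT : ℕ) (hI : 2 ≤ I) (h1 : 1 ≤ IT) (h2 : IT ≤ I - 1)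
    (a b : Fin I → ℝ) (ha : ∑ i, a i = 0) (hb : ∑ i, b i = 0) :
    (srsCov I IT (epsB I IT a) (epsB I IT b)
        = (((I - IT : ℕ) : ℝ) / ((IT : ℝ) * I)) * ((1 / ((I : ℝ) - 1)) * ∑ i, a i * b i))
    ∧
    (srsCov I IT (epsB I IT a) (epsB I IT b)
        = (((I - IT : ℕ) : ℝ) / (2 * (IT : ℝ) * I)) *
            ((1 / ((I : ℝ) - 1)) * ∑ i, (a i) ^ 2
              + (1 / ((I : ℝ) - 1)) * ∑ i, (b i) ^ 2
              - (1 / ((I : ℝ) - 1)) * ∑ i, (a i - b i) ^ 2)) := by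
  classical
  have hITI : IT ≤ I := le_trans h2 (Nat.sub_le I 1)
  have hITlt : IT < I := by omega
  set U : Finset (Fin I) := Finset.univ with hU
  set P := Finset.powersetCard IT U with hPdef
  set N : ℕ := P.card with hNdef
  have hNval : N = I.choose IT := by
    rw [hNdef, hPdef, card_powersetCard, hU, card_univ, Fintype.card_fin]
  have hNpos : 0 < N := by rw [hNval]; exact Nat.choose_pos hITI
  set c1 : ℕ := (I - 1).choose (IT - 1) with hc1def
  -- single-element count
  have L1 : ∀ i : Fin I, (P.filter (fun s => i ∈ s)).card = c1 := by
    intro i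
    have hcard : (P.filter (fun s => i ∈ s)).card
        = (Finset.powersetCard (IT - 1) (U.erase i)).card := by
      apply Finset.card_nbij' (fun s => s.erase i) (fun t => insert i t)
      · intro s hs
        simp only [mem_coe, mem_filter, hPdef, mem_powersetCard] at hs
        obtain ⟨⟨hsub, hscard⟩, hi⟩ := hs
        rw [mem_coe, mem_powersetCard]
        exact ⟨erase_subset_erase i hsub, by rw [card_erase_of_mem hi, hscard]⟩
      · intro t ht
        rw [mem_coe, mem_powersetCard] at ht
        obtain ⟨hsub, htcard⟩ := ht
        have hnot : i ∉ t := fun h => (mem_erase.1 (hsub h)).1 rfl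
        simp only [mem_coe, mem_filter, hPdef, mem_powersetCard]
        refine ⟨⟨subset_univ _, ?_⟩, mem_insert_self _ _⟩
        rw [card_insert_of_notMem hnot, htcard]; omega
      · intro s hs
        simp only [mem_coe, mem_filter] at hs
        exact insert_erase hs.2
      · intro t ht
        rw [mem_coe, mem_powersetCard] at ht
        have hnot : i ∉ t := fun h => (mem_erase.1 (ht.1 h)).1 rfl
        exact erase_insert hnot
    have hUc : #(U.erase i) = I - 1 := by
      rw [card_erase_of_mem (mem_univ i), card_univ, Fintype.card_fin]
    rw [hcard, card_powersetCard, hUc, hc1def]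
  -- pair count
  obtain ⟨C2, L2, hC2key⟩ : ∃ C2 : ℕ,
      (∀ i j : Fin I, i ≠ j → (P.filter (fun s => i ∈ s ∧ j ∈ s)).card = C2) ∧
      (I - 1) * C2 = (IT - 1) * c1 := by
    rcases Nat.lt_or_ge IT 2 with hIT1 | hIT2
    · have hIT : IT = 1 := by omega
      refine ⟨0, fun i j hij => ?_, by simp [hIT]⟩
      rw [Finset.card_eq_zero, Finset.filter_eq_empty_iff]
      rintro s hs ⟨hi, hj⟩
      rw [hPdef, mem_powersetCard] at hs
      have hsub : ({i, j} : Finset (Fin I)) ⊆ s := by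
        intro x hx; simp only [mem_insert, mem_singleton] at hx
        rcases hx with rfl | rfl <;> assumption
      have := Finset.card_le_card hsub
      rw [card_pair hij, hs.2, hIT] at this; omega
    · refine ⟨(I - 2).choose (IT - 2), fun i j hij => ?_, ?_⟩
      · have hcard : (P.filter (fun s => i ∈ s ∧ j ∈ s)).card
            = (Finset.powersetCard (IT - 2) ((U.erase i).erase j)).card := by
          apply Finset.card_nbij' (fun s => (s.erase i).erase j)
              (fun t => insert i (insert j t))
          · intro s hs
            simp only [mem_coe, mem_filter, hPdef, mem_powersetCard] at hs
            obtain ⟨⟨hsub, hscard⟩, hi, hj⟩ := hs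
            rw [mem_coe, mem_powersetCard]
            refine ⟨erase_subset_erase j (erase_subset_erase i hsub), ?_⟩
            rw [card_erase_of_mem (mem_erase.2 ⟨hij.symm, hj⟩),
              card_erase_of_mem hi, hscard]
            omega
          · intro t ht
            rw [mem_coe, mem_powersetCard] at ht
            obtain ⟨hsub, htcard⟩ := ht
            have hjt : j ∉ t := fun h => (mem_erase.1 (hsub h)).1 rfl
            have hit : i ∉ t := fun h =>
              (mem_erase.1 (mem_of_mem_erase (hsub h))).1 rfl
            simp only [mem_coe, mem_filter, hPdef, mem_powersetCard]
            refine ⟨⟨subset_univ _, ?_⟩, mem_insert_self _ _,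
              mem_insert_of_mem (mem_insert_self _ _)⟩
            rw [card_insert_of_notMem (by simp [hit, hij]),
              card_insert_of_notMem hjt, htcard]
            omega
          · intro s hs
            simp only [mem_coe, mem_filter] at hs
            dsimp only
            rw [insert_erase (mem_erase.2 ⟨hij.symm, hs.2.2⟩),
              insert_erase hs.2.1]
          · intro t ht
            rw [mem_coe, mem_powersetCard] at ht
            have hjt : j ∉ t := fun h => (mem_erase.1 (ht.1 h)).1 rfl
            have hit : i ∉ t := fun h =>
              (mem_erase.1 (mem_of_mem_erase (ht.1 h))).1 rfl
            dsimp only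
            rw [erase_insert (by simp [mem_insert, hit, hij]), erase_insert hjt]
        have hUc : #((U.erase i).erase j) = I - 2 := by
          rw [card_erase_of_mem (mem_erase.2 ⟨hij.symm, mem_univ j⟩),
            card_erase_of_mem (mem_univ i), card_univ, Fintype.card_fin]
          omega
        rw [hcard, card_powersetCard, hUc]
      · have key := Nat.add_one_mul_choose_eq (I - 2) (IT - 2)
        have h2' : I - 2 + 1 = I - 1 := by omega
        have h3' : IT - 2 + 1 = IT - 1 := by omega
        rw [h2', h3'] at key
        rw [hc1def, key]; ring
  -- nat identity: I * c1 = IT * N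
  have hkeyN : I * c1 = IT * N := by
    have key := Nat.add_one_mul_choose_eq (I - 1) (IT - 1)
    have h2' : I - 1 + 1 = I := by omega
    have h3' : IT - 1 + 1 = IT := by omega
    rw [h2', h3'] at key
    rw [hc1def, hNval, key]; ring
  have hIne : (I : ℝ) ≠ 0 := by positivity
  have hI2 : (2:ℝ) ≤ (I:ℝ) := by exact_mod_cast hI
  have hI1ne : (I : ℝ) - 1 ≠ 0 := by linarith
  have hITne : (IT : ℝ) ≠ 0 := by positivity
  have hNne : (N : ℝ) ≠ 0 := by positivity
  have hkeyNr : (I : ℝ) * c1 = (IT : ℝ) * N := by exact_mod_cast hkeyN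
  have hC2r : ((I : ℝ) - 1) * C2 = ((IT : ℝ) - 1) * c1 := by
    have hcast : ((I - 1 : ℕ) : ℝ) * C2 = ((IT - 1 : ℕ) : ℝ) * c1 := by
      exact_mod_cast hC2key
    rw [Nat.cast_sub (by omega : 1 ≤ I), Nat.cast_sub h1] at hcast
    exact_mod_cast hcast
  -- sums of indicators over P
  have hInd1 : ∀ i : Fin I,
      ∑ s ∈ P, (if i ∈ s then (1:ℝ) else 0) = (c1 : ℝ) := by
    intro i
    rw [Finset.sum_boole]
    norm_cast
    exact L1 i
  have hInd2 : ∀ i j : Fin I, i ≠ j →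
      ∑ s ∈ P, (if i ∈ s then (1:ℝ) else 0) * (if j ∈ s then (1:ℝ) else 0)
        = (C2 : ℝ) := by
    intro i j hij
    have : ∀ s : Finset (Fin I),
        (if i ∈ s then (1:ℝ) else 0) * (if j ∈ s then (1:ℝ) else 0)
          = if i ∈ s ∧ j ∈ s then (1:ℝ) else 0 := by
      intro s; by_cases hi : i ∈ s <;> by_cases hj : j ∈ s <;> simp [hi, hj]
    rw [Finset.sum_congr rfl (fun s _ => this s), Finset.sum_boole]
    norm_cast
    exact L2 i j hij
  set p : ℝ := (IT : ℝ) / I with hpdef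
  -- ∑_s X_i = 0
  have hXsum : ∀ i : Fin I,
      ∑ s ∈ P, ((if i ∈ s then (1:ℝ) else 0) - p) = 0 := by
    intro i
    rw [Finset.sum_sub_distrib, hInd1 i, Finset.sum_const, nsmul_eq_mul, ← hNdef]
    rw [hpdef]
    field_simp
    linear_combination hkeyNr
  -- expectation of epsB is 0
  have hE0 : ∀ c : Fin I → ℝ, srsExp I IT (epsB I IT c) = 0 := by
    intro c
    have hz : ∑ s ∈ P, epsB I IT c s = 0 := by
      unfold epsB
      rw [← Finset.mul_sum, Finset.sum_comm]
      have : ∀ i : Fin I,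
          ∑ s ∈ P, ((if i ∈ s then (1:ℝ) else 0) - (IT:ℝ)/I) * c i = 0 := by
        intro i
        rw [← Finset.sum_mul, ← hpdef, hXsum i, zero_mul]
      rw [Finset.sum_congr rfl (fun i _ => this i), Finset.sum_const_zero, mul_zero]
    unfold srsExp
    rw [← hPdef, ← hNdef, hz, zero_div]
  -- the second moment
  have hA : ∀ i j : Fin I,
      ∑ s ∈ P, ((if i ∈ s then (1:ℝ) else 0) - p) * ((if j ∈ s then (1:ℝ) else 0) - p)
        = ((C2:ℝ) - 2*p*c1 + N*p^2) + (if i = j then ((c1:ℝ) - C2) else 0) := by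
    intro i j
    by_cases hij : i = j
    · subst hij
      have hptw : ∀ s : Finset (Fin I),
          ((if i ∈ s then (1:ℝ) else 0) - p) * ((if i ∈ s then (1:ℝ) else 0) - p)
            = (if i ∈ s then (1:ℝ) else 0) - 2*p*(if i ∈ s then (1:ℝ) else 0) + p^2 := by
        intro s; by_cases hi : i ∈ s <;> simp [hi] <;> ring
      rw [Finset.sum_congr rfl (fun s _ => hptw s)]
      rw [Finset.sum_add_distrib, Finset.sum_sub_distrib, hInd1 i, ← Finset.mul_sum,
        hInd1 i, Finset.sum_const, nsmul_eq_mul, ← hNdef]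
      simp only [eq_self_iff_true, if_true]
      ring
    · have hptw : ∀ s : Finset (Fin I),
          ((if i ∈ s then (1:ℝ) else 0) - p) * ((if j ∈ s then (1:ℝ) else 0) - p)
            = (if i ∈ s then (1:ℝ) else 0) * (if j ∈ s then (1:ℝ) else 0)
              - p*(if i ∈ s then (1:ℝ) else 0) - p*(if j ∈ s then (1:ℝ) else 0) + p^2 := by
        intro s; ring
      rw [Finset.sum_congr rfl (fun s _ => hptw s)]
      rw [Finset.sum_add_distrib, Finset.sum_sub_distrib, Finset.sum_sub_distrib,
        hInd2 i j hij, ← Finset.mul_sum, ← Finset.mul_sum, hInd1 i, hInd1 j,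
        Finset.sum_const, nsmul_eq_mul, ← hNdef]
      simp only [if_neg hij]
      ring
  have hsum2 : ∑ s ∈ P, epsB I IT a s * epsB I IT b s
      = (1/(IT:ℝ))^2 * (((c1:ℝ) - C2) * ∑ i, a i * b i) := by
    have hprod : ∀ s : Finset (Fin I), epsB I IT a s * epsB I IT b s
        = (1/(IT:ℝ))^2 * ∑ i : Fin I, ∑ j : Fin I,
            (a i * b j) * (((if i ∈ s then (1:ℝ) else 0) - p)
              * ((if j ∈ s then (1:ℝ) else 0) - p)) := by
      intro s
      unfold epsB
      rw [hpdef.symm]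
      have hms := Fintype.sum_mul_sum
        (fun i : Fin I => ((if i ∈ s then (1:ℝ) else 0) - p) * a i)
        (fun j : Fin I => ((if j ∈ s then (1:ℝ) else 0) - p) * b j)
      have e1 : (1 / (IT:ℝ) * ∑ i : Fin I, ((if i ∈ s then (1:ℝ) else 0) - p) * a i) *
          (1 / (IT:ℝ) * ∑ j : Fin I, ((if j ∈ s then (1:ℝ) else 0) - p) * b j)
          = (1/(IT:ℝ))^2 * ((∑ i : Fin I, ((if i ∈ s then (1:ℝ) else 0) - p) * a i) *
            (∑ j : Fin I, ((if j ∈ s then (1:ℝ) else 0) - p) * b j)) := by ring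
      rw [e1, hms]
      congr 1
      apply Finset.sum_congr rfl
      intro i _
      apply Finset.sum_congr rfl
      intro j _
      ring
    rw [Finset.sum_congr rfl (fun s _ => hprod s), ← Finset.mul_sum]
    congr 1
    rw [Finset.sum_comm]
    have hswap : ∀ i : Fin I, ∑ s ∈ P, ∑ j : Fin I,
        (a i * b j) * (((if i ∈ s then (1:ℝ) else 0) - p)
          * ((if j ∈ s then (1:ℝ) else 0) - p))
        = ∑ j : Fin I, (a i * b j) *
            (((C2:ℝ) - 2*p*c1 + N*p^2) + (if i = j then ((c1:ℝ) - C2) else 0)) := by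
      intro i
      rw [Finset.sum_comm]
      apply Finset.sum_congr rfl
      intro j _
      rw [← Finset.mul_sum, hA i j]
    rw [Finset.sum_congr rfl (fun i _ => hswap i)]
    have hsplit : ∀ i : Fin I, ∑ j : Fin I, (a i * b j) *
        (((C2:ℝ) - 2*p*c1 + N*p^2) + (if i = j then ((c1:ℝ) - C2) else 0))
        = (a i * ((C2:ℝ) - 2*p*c1 + N*p^2)) * (∑ j, b j)
          + a i * b i * ((c1:ℝ) - C2) := by
      intro i
      have hpt : ∀ j : Fin I, (a i * b j) *
          (((C2:ℝ) - 2*p*c1 + N*p^2) + (if i = j then ((c1:ℝ) - C2) else 0))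
          = (a i * ((C2:ℝ) - 2*p*c1 + N*p^2)) * b j
            + (if i = j then a i * b j * ((c1:ℝ) - C2) else 0) := by
        intro j; by_cases h : i = j
        · subst h; simp; ring
        · simp only [if_neg h, add_zero]; ring
      rw [Finset.sum_congr rfl (fun j _ => hpt j), Finset.sum_add_distrib,
        Finset.sum_ite_eq, ← Finset.mul_sum]
      simp
    rw [Finset.sum_congr rfl (fun i _ => hsplit i), Finset.sum_add_distrib, hb]
    simp only [mul_zero, Finset.sum_const_zero, zero_add]
    rw [← Finset.sum_mul, mul_comm]
  -- the covariance
  have hcov : srsCov I IT (epsB I IT a) (epsB I IT b)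
      = ((1/(IT:ℝ))^2 * (((c1:ℝ) - C2) * ∑ i, a i * b i)) / N := by
    unfold srsCov
    rw [hE0 a, hE0 b, mul_zero, sub_zero]
    unfold srsExp
    rw [← hPdef, ← hNdef, hsum2]
  -- coefficient identity
  have hITsub : ((I - IT : ℕ) : ℝ) = (I : ℝ) - IT := by
    rw [Nat.cast_sub hITI]
  have hfirst : srsCov I IT (epsB I IT a) (epsB I IT b)
      = (((I - IT : ℕ) : ℝ) / ((IT : ℝ) * I)) * ((1 / ((I : ℝ) - 1)) * ∑ i, a i * b i) := by
    rw [hcov, hITsub]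
    have hcoef : ((1/(IT:ℝ))^2 * ((c1:ℝ) - C2)) / N
        = (((I:ℝ) - IT) / ((IT : ℝ) * I)) * (1 / ((I : ℝ) - 1)) := by
      field_simp
      linear_combination ((I:ℝ)-(IT:ℝ)) * hkeyNr - (I:ℝ) * hC2r
    calc ((1/(IT:ℝ))^2 * (((c1:ℝ) - C2) * ∑ i, a i * b i)) / N
        = ((1/(IT:ℝ))^2 * ((c1:ℝ) - C2)) / N * ∑ i, a i * b i := by ring
      _ = (((I:ℝ) - IT) / ((IT : ℝ) * I)) * (1 / ((I : ℝ) - 1)) * ∑ i, a i * b i := by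
          rw [hcoef]
      _ = (((I:ℝ) - IT) / ((IT : ℝ) * I)) * ((1 / ((I : ℝ) - 1)) * ∑ i, a i * b i) := by
          ring
  refine ⟨hfirst, ?_⟩
  rw [hfirst]
  have hexp : ∑ i, (a i - b i)^2
      = ∑ i, (a i)^2 + ∑ i, (b i)^2 - 2 * ∑ i, a i * b i := by
    have hpt : ∀ i : Fin I, (a i - b i)^2 = (a i)^2 + (b i)^2 - 2*(a i * b i) :=
      fun i => by ring
    rw [Finset.sum_congr rfl (fun i _ => hpt i), Finset.sum_sub_distrib,
      Finset.sum_add_distrib, Finset.mul_sum]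
  rw [hexp]
  field_simp
  ring
end

section
/- (Detection of synergistic spillover / Bell-type inequality) Suppose each unit has four binary potential outcomes Y(c), Y(ib), Y(is), Y(ibs) ∈ {0,1}. If for every unit the no-synergistic-spillover condition holds—i.e., any unit that responds identically when assigned c, ib, or is also responds identically when assigned ibs (formally: Y(c)=Y(ib)=Y(is) implies Y(ibs)=Y(c))—then the expectation inequality E[Y(ibs)] − E[Y(c)] − E[Y(is)] − E[Y(ib)] ≤ 0 holds. Contrapositively, E[Y(ibs)] − E[Y(c)] − E[Y(is)] − E[Y(ib)] > 0 implies synergistic spillover is present. -/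
open Finset

/-- Bell-type inequality for synergistic spillover: if each unit of a finite
population has binary potential outcomes `Y(c), Y(ib), Y(is), Y(ibs) ∈ {0,1}` and no unit
exhibits synergistic spillover (any unit responding identically under `c`, `ib`, `is` also
responds identically under `ibs`), then
`E[Y(ibs)] − E[Y(c)] − E[Y(is)] − E[Y(ib)] ≤ 0`. -/
theorem bell_inequality_synergistic_spillover
    (α : Type*) [Fintype α] [Nonempty α]
    (Yc Yib Yis Yibs : α → ℝ)
    (hc : ∀ u, Yc u = 0 ∨ Yc u = 1)
    (hib : ∀ u, Yib u = 0 ∨ Yib u = 1)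
    (his : ∀ u, Yis u = 0 ∨ Yis u = 1)
    (hibs : ∀ u, Yibs u = 0 ∨ Yibs u = 1)
    (hnosyn : ∀ u, (Yc u = Yib u ∧ Yib u = Yis u) → Yibs u = Yc u) :
    (∑ u, Yibs u) / (Fintype.card α : ℝ)
      - (∑ u, Yc u) / (Fintype.card α : ℝ)
      - (∑ u, Yis u) / (Fintype.card α : ℝ)
      - (∑ u, Yib u) / (Fintype.card α : ℝ) ≤ 0 := by
  have key : ∀ u, Yibs u - Yc u - Yis u - Yib u ≤ 0 := by
    intro u
    rcases hc u with h1 | h1 <;> rcases hib u with h2 | h2 <;>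
      rcases his u with h3 | h3 <;> rcases hibs u with h4 | h4 <;>
      simp_all <;> nlinarith [hnosyn u]
  have hsum : (∑ u, (Yibs u - Yc u - Yis u - Yib u)) ≤ 0 :=
    Finset.sum_nonpos (fun u _ => key u)
  have hcard : (0:ℝ) < (Fintype.card α : ℝ) := by
    exact_mod_cast Fintype.card_pos
  have hS : (∑ u, Yibs u) - (∑ u, Yc u) - (∑ u, Yis u) - (∑ u, Yib u) ≤ 0 := by
    simpa [Finset.sum_sub_distrib] using hsum
  have heq : (∑ u, Yibs u) / (Fintype.card α : ℝ)
      - (∑ u, Yc u) / (Fintype.card α : ℝ)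
      - (∑ u, Yis u) / (Fintype.card α : ℝ)
      - (∑ u, Yib u) / (Fintype.card α : ℝ)
      = ((∑ u, Yibs u) - (∑ u, Yc u) - (∑ u, Yis u) - (∑ u, Yib u))
        / (Fintype.card α : ℝ) := by ring
  rw [heq]
  exact div_nonpos_of_nonpos_of_nonneg hS hcard.le
end
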